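/- Let Q be a commutative R-algebra free of rank 4 with R-basis 1, q₁, q₂, q₃ such that q₁q₂ has no q₁ or q₂ component and q₁q₃ has no q₁ component. Suppose C is free of rank 2 with basis c₁, c₂ and φ: Q/R → C is the quadratic map given by φ = A·c₂ + B·c₁ where A = Σ_{i≤j} a_{ij}x_ix_j, B = Σ_{i≤j} b_{ij}x_ix_j in the dual coordinates x_i of q_i. Write q_iq_j = m⁰_{ij} + Σ_k m^k_{ij} q_k and λ^{ℓ₁ℓ₂}_{ℓ₃ℓ₄} = a_{ℓ₁ℓ₂}b_{ℓ₃ℓ₄} − b_{ℓ₁ℓ₂}a_{ℓ₃ℓ₄}. If the resolvent condition δ(1∧x∧y∧xy) = φ(x)∧φ(y) holds for all x, y ∈ Q (with δ the orientation sending 1∧q₁∧q₂∧q₃ to c₁∧c₂ appropriately), then for every permutation (i,j,k) of (1,2,3) with sign ±: m^k_{ij} = ±λ^{jj}_{ii} and m^k_{ii} = ±λ^{ij}_{ii}. -/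

import Mathlib

/-!
For a permutation `(i, j, k)` of `(1, 2, 3)`, the rows of `1, q_i, q_j` are standard basis
vectors, so `det(1, q_i, q_j, z)` is the `q_k`-coordinate of `z` times the sign of the
permutation. Evaluating the resolvent condition at `x = q_i, y = q_j` therefore gives
`±m^k_{ij} = λ^{jj}_{ii}`. At `x = q_i, y = q_i + q_j` the row of `y` may be replaced by that of
`q_j`, giving `±(m^k_{ii} + m^k_{ij})`, while the right-hand side grows by `λ^{ij}_{ii}`.
-/

variable {R : Type*} [CommRing R] {Q : Type*} [CommRing Q] [Algebra R Q]

/-- The coordinates of `x` in `Q/R` with respect to the basis `q₁, q₂, q₃` (the images of the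
basis elements `e 1, e 2, e 3` of `Q`). -/
noncomputable def coordsQ (e : Module.Basis (Fin 4) R Q) (x : Q) (p : Fin 3) : R :=
  e.repr x p.succ

/-- Evaluation of the ternary quadratic form `Σ_{i≤j} a_{ij} x_i x_j` on a coordinate vector. -/
def evalTQF (a : Fin 3 → Fin 3 → R) (v : Fin 3 → R) : R :=
  ∑ p, ∑ q, if p ≤ q then a p q * v p * v q else 0

/-- The structure constant `m^k_{ij}`: the coefficient of `q_k` in `q_i q_j`. -/
noncomputable def structConst (e : Module.Basis (Fin 4) R Q) (i j k : Fin 3) : R :=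
  e.repr (e i.succ * e j.succ) k.succ

open Matrix Equiv

theorem det_updateRow_one {ι : Type*} [Fintype ι] [DecidableEq ι] (j : ι) (w : ι → R) :
    (updateRow (1 : Matrix ι ι R) j w).det = w j := by
  have hw : ∑ k, w k • (1 : Matrix ι ι R) k = w := by
    ext i
    simp [Matrix.one_apply]
  simpa [hw] using det_updateRow_sum (1 : Matrix ι ι R) j w

theorem apply_eq_sign_mul_det_of_row_eq_single {ι : Type*} [Fintype ι] [DecidableEq ι]
    (M : Matrix ι ι R) (τ : Perm ι) (r₀ : ι) (hM : ∀ r ≠ r₀, M r = Pi.single (τ r) 1) :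
    M r₀ (τ r₀) = Perm.sign τ * M.det := by
  have hperm : M.submatrix id τ = updateRow 1 r₀ (fun c => M r₀ (τ c)) := by
    ext r c
    rcases eq_or_ne r r₀ with rfl | hr
    · simp
    · simp [hM r hr, hr, Pi.single_apply, Matrix.one_apply, eq_comm]
  rw [← det_permute', hperm, det_updateRow_one]

theorem coordsQ_add (e : Module.Basis (Fin 4) R Q) (x y : Q) :
    coordsQ e (x + y) = coordsQ e x + coordsQ e y := by
  ext p
  simp [coordsQ]

theorem coordsQ_basis_succ (e : Module.Basis (Fin 4) R Q) (i : Fin 3) :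
    coordsQ e (e i.succ) = Pi.single i 1 := by
  ext p
  simp [coordsQ, Finsupp.single_apply, Pi.single_apply, eq_comm]

theorem evalTQF_single (a : Fin 3 → Fin 3 → R) (i : Fin 3) :
    evalTQF a (Pi.single i 1) = a i i := by
  fin_cases i <;> simp [evalTQF, Fin.sum_univ_three]

theorem evalTQF_single_add_single {a : Fin 3 → Fin 3 → R} (ha : ∀ i j, a i j = a j i)
    {i j : Fin 3} (hij : i ≠ j) :
    evalTQF a (Pi.single i 1 + Pi.single j 1) = a i i + a j j + a i j := by
  fin_cases i <;> fin_cases j <;>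
    simp [evalTQF, Fin.sum_univ_three, ha 1 0, ha 2 0, ha 2 1] at hij ⊢ <;> ring

theorem det_repr_add_previous_row (e : Module.Basis (Fin 4) R Q) (w x y z : Q) :
    (of fun r s : Fin 4 => e.repr (![w, x, x + y, z] r) s).det =
      (of fun r s : Fin 4 => e.repr (![w, x, y, z] r) s).det := by
  set M := of fun r s : Fin 4 => e.repr (![w, x, y, z] r) s
  have hrow : (of fun r s : Fin 4 => e.repr (![w, x, x + y, z] r) s) =
      updateRow M 2 (M 2 + M 1) := by
    ext r s
    fin_cases r <;> simp [M, add_comm]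
  rw [hrow, det_updateRow_add_self M (by decide)]

theorem basis_repr_eq_sign_smul_det (e : Module.Basis (Fin 4) R Q) (he : e 0 = 1)
    (σ : Perm (Fin 3)) (z : Q) :
    e.repr z (σ 2).succ = (Perm.sign σ : ℤ) •
      (of fun r s : Fin 4 => e.repr (![1, e (σ 0).succ, e (σ 1).succ, z] r) s).det := by
  set M : Matrix (Fin 4) (Fin 4) R :=
    of fun r s => e.repr (![1, e (σ 0).succ, e (σ 1).succ, z] r) s
  have hsign : Perm.sign (Perm.decomposeFin.symm (0, σ)) = Perm.sign σ := by simp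
  have hτ : Perm.decomposeFin.symm (0, σ) 2 = (σ 1).succ :=
    Perm.decomposeFin_symm_apply_succ σ 0 1
  have hrows : ∀ r ≠ 3, M r = Pi.single (Perm.decomposeFin.symm (0, σ) r) 1 := by
    intro r hr
    ext s
    fin_cases r <;>
      simp [M, ← he, hτ, Finsupp.single_apply, Pi.single_apply, eq_comm] at hr ⊢
  rw [zsmul_eq_mul, ← hsign, ← apply_eq_sign_mul_det_of_row_eq_single M _ 3 hrows]
  rfl

theorem resolvent_condition_determines_multiplication_general
    (e : Module.Basis (Fin 4) R Q) (he : e 0 = 1)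
    (a b : Fin 3 → Fin 3 → R)
    (ha : ∀ i j, a i j = a j i) (hb : ∀ i j, b i j = b j i)
    (hres : ∀ x y : Q,
      Matrix.det (Matrix.of fun r s : Fin 4 => e.repr (![(1 : Q), x, y, x * y] r) s) =
        evalTQF b (coordsQ e x) * evalTQF a (coordsQ e y) -
          evalTQF a (coordsQ e x) * evalTQF b (coordsQ e y)) :
    ∀ σ : Equiv.Perm (Fin 3),
      structConst e (σ 0) (σ 1) (σ 2) =
        ((Equiv.Perm.sign σ : ℤ) •
          (a (σ 1) (σ 1) * b (σ 0) (σ 0) - b (σ 1) (σ 1) * a (σ 0) (σ 0)) : R) ∧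
      structConst e (σ 0) (σ 0) (σ 2) =
        ((Equiv.Perm.sign σ : ℤ) •
          (a (σ 0) (σ 1) * b (σ 0) (σ 0) - b (σ 0) (σ 1) * a (σ 0) (σ 0)) : R) := by
  intro σ
  have hij : σ 0 ≠ σ 1 := σ.injective.ne (by decide)
  have hres₁ := hres (e (σ 0).succ) (e (σ 1).succ)
  have hres₂ := hres (e (σ 0).succ) (e (σ 0).succ + e (σ 1).succ)
  rw [det_repr_add_previous_row] at hres₂
  simp only [coordsQ_add, coordsQ_basis_succ, evalTQF_single,
    evalTQF_single_add_single ha hij, evalTQF_single_add_single hb hij] at hres₁ hres₂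
  have hmix : structConst e (σ 0) (σ 1) (σ 2) = (Perm.sign σ : ℤ) •
      (b (σ 0) (σ 0) * a (σ 1) (σ 1) - a (σ 0) (σ 0) * b (σ 1) (σ 1)) := by
    rw [structConst, basis_repr_eq_sign_smul_det e he, hres₁]
  have hsquare_add_mix :
      structConst e (σ 0) (σ 0) (σ 2) + structConst e (σ 0) (σ 1) (σ 2) =
        (Perm.sign σ : ℤ) • (b (σ 0) (σ 0) * (a (σ 0) (σ 0) + a (σ 1) (σ 1) + a (σ 0) (σ 1)) -
          a (σ 0) (σ 0) * (b (σ 0) (σ 0) + b (σ 1) (σ 1) + b (σ 0) (σ 1))) := by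
    rw [structConst, structConst, ← Finsupp.add_apply, ← map_add, ← mul_add,
      basis_repr_eq_sign_smul_det e he, hres₂]
  constructor
  · rw [hmix]
    congr 1
    ring
  · rw [eq_sub_of_add_eq hsquare_add_mix, hmix, ← smul_sub]
    congr 1
    ring

/-- If `Q` is a quartic algebra with basis `1, q₁, q₂, q₃` (normalized so that `q₁q₂` has no
`q₁` or `q₂` component and `q₁q₃` has no `q₁` component) and the resolvent condition
`δ(1∧x∧y∧xy) = φ(x)∧φ(y)` holds for the quadratic map `φ = A·c₂ + B·c₁`, then for every
permutation `(i,j,k)` of the indices with sign `±`, `m^k_{ij} = ±λ^{jj}_{ii}` and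
`m^k_{ii} = ±λ^{ij}_{ii}`. -/
theorem resolvent_condition_determines_multiplication
    (e : Module.Basis (Fin 4) R Q) (he : e 0 = 1)
    (a b : Fin 3 → Fin 3 → R)
    (ha : ∀ i j, a i j = a j i) (hb : ∀ i j, b i j = b j i)
    (hnorm1 : e.repr (e 1 * e 2) 1 = 0)
    (hnorm2 : e.repr (e 1 * e 2) 2 = 0)
    (hnorm3 : e.repr (e 1 * e 3) 1 = 0)
    (hres : ∀ x y : Q,
      Matrix.det (Matrix.of fun r s : Fin 4 => e.repr (![(1 : Q), x, y, x * y] r) s) =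
        evalTQF b (coordsQ e x) * evalTQF a (coordsQ e y) -
          evalTQF a (coordsQ e x) * evalTQF b (coordsQ e y)) :
    ∀ σ : Equiv.Perm (Fin 3),
      structConst e (σ 0) (σ 1) (σ 2) =
        ((Equiv.Perm.sign σ : ℤ) •
          (a (σ 1) (σ 1) * b (σ 0) (σ 0) - b (σ 1) (σ 1) * a (σ 0) (σ 0)) : R) ∧
      structConst e (σ 0) (σ 0) (σ 2) =
        ((Equiv.Perm.sign σ : ℤ) •
          (a (σ 0) (σ 1) * b (σ 0) (σ 0) - b (σ 0) (σ 1) * a (σ 0) (σ 0)) : R) :=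
  resolvent_condition_determines_multiplication_general e he a b ha hb hres
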